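/- arXiv:2502.19842 — 2 statements merged into one kernel-verified Lean document; each statement's English description precedes it below -/
import Mathlib

section
/- Let b ≥ 1 and let {X_{k,i} : k ∈ {0, 1, …, b}, i ∈ ℕ} be a jointly independent family of identically distributed real-valued random variables with E = 0 and second moment 1. For d ∈ ℕ set z_k^{(d)} = (X_{k,0}, …, X_{k,d−1}) ∈ ℝ^d. Then the sequence of random variables d ↦ Σ_{k=1}^{b} exp(S(z_0^{(d)}, z_k^{(d)})) converges to b in probability as d → ∞, where S denotes cosine similarity with the zero-division convention. -/
/-!
By the strong law of large numbers, applied in `i` to the i.i.d. squares `X k i ^ 2` and to the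
i.i.d. products `X 0 i * X k i` (whose mean is `0` by independence), almost surely
`‖z_k‖² / d → 1` and `⟪z_0, z_k⟫ / d → 0`. Hence every cosine similarity `S(z_0, z_k)` tends to
`0` almost surely, so the sum of the `b` exponentials tends to `b` almost surely, and almost sure
convergence implies convergence in probability.
-/

open MeasureTheory ProbabilityTheory Filter Finset Topology

/-- Cosine similarity of two vectors in Euclidean space, with the convention
that division by zero yields `0` (which is the Lean convention for `/`). -/
noncomputable def cosSim {n : ℕ} (u v : EuclideanSpace ℝ (Fin n)) : ℝ :=
  (inner ℝ u v : ℝ) / (‖u‖ * ‖v‖)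

/-- The random vector `(X 0, …, X (d-1)) ∈ ℝᵈ` built from a sequence of
real random variables. -/
noncomputable def zvec {Ω : Type*} (X : ℕ → Ω → ℝ) (d : ℕ) (ω : Ω) :
    EuclideanSpace ℝ (Fin d) :=
  (WithLp.equiv 2 (Fin d → ℝ)).symm fun i => X i ω

section Deterministic

variable {Ω : Type*} (X Y : ℕ → Ω → ℝ) (d : ℕ) (ω : Ω)

lemma cosSim_zvec :
    cosSim (zvec X d ω) (zvec Y d ω) =
      (∑ i ∈ range d, X i ω * Y i ω) /
        (√(∑ i ∈ range d, X i ω ^ 2) * √(∑ i ∈ range d, Y i ω ^ 2)) := by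
  simp only [cosSim, zvec, PiLp.inner_apply, EuclideanSpace.norm_eq, WithLp.equiv_symm_apply,
    RCLike.inner_apply', conj_trivial, Real.norm_eq_abs, sq_abs]
  rw [Fin.sum_univ_eq_sum_range (fun i => X i ω * Y i ω),
    Fin.sum_univ_eq_sum_range (fun i => X i ω ^ 2), Fin.sum_univ_eq_sum_range (fun i => Y i ω ^ 2)]

-- Also true for `d = 0`, where both sides are `0 / 0 = 0`.
lemma cosSim_zvec_eq_avg :
    cosSim (zvec X d ω) (zvec Y d ω) =
      ((∑ i ∈ range d, X i ω * Y i ω) / d) /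
        (√((∑ i ∈ range d, X i ω ^ 2) / d) * √((∑ i ∈ range d, Y i ω ^ 2) / d)) := by
  rcases Nat.eq_zero_or_pos d with rfl | hd
  · simp [cosSim_zvec]
  have hd : (0 : ℝ) < d := by exact_mod_cast hd
  rw [cosSim_zvec, Real.sqrt_div' _ hd.le, Real.sqrt_div' _ hd.le, div_mul_div_comm,
    Real.mul_self_sqrt hd.le, div_div_div_cancel_right₀ hd.ne']

lemma tendsto_cosSim_zvec {c s t : ℝ} (hs : 0 < s) (ht : 0 < t)
    (hXY : Tendsto (fun d : ℕ => (∑ i ∈ range d, X i ω * Y i ω) / d) atTop (𝓝 c))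
    (hX : Tendsto (fun d : ℕ => (∑ i ∈ range d, X i ω ^ 2) / d) atTop (𝓝 s))
    (hY : Tendsto (fun d : ℕ => (∑ i ∈ range d, Y i ω ^ 2) / d) atTop (𝓝 t)) :
    Tendsto (fun d => cosSim (zvec X d ω) (zvec Y d ω)) atTop (𝓝 (c / (√s * √t))) := by
  simp only [cosSim_zvec_eq_avg]
  exact hXY.div (hX.sqrt.mul hY.sqrt) (by positivity)

end Deterministic

section StrongLaw

variable {Ω : Type*} {mΩ : MeasurableSpace Ω} {μ : Measure Ω}

lemma aemeasurable_cosSim_zvec {X Y : ℕ → Ω → ℝ} (hX : ∀ i, AEMeasurable (X i) μ)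
    (hY : ∀ i, AEMeasurable (Y i) μ) (d : ℕ) :
    AEMeasurable (fun ω => cosSim (zvec X d ω) (zvec Y d ω)) μ := by
  simp only [cosSim_zvec]
  fun_prop

theorem ae_tendsto_avg_comp {E : Type*} [MeasurableSpace E] {Y : ℕ → Ω → E} {φ : E → ℝ}
    (hφ : Measurable φ) (hindep : Pairwise fun i j => Y i ⟂ᵢ[μ] Y j)
    (hident : ∀ i, IdentDistrib (Y i) (Y 0) μ μ) (hint : Integrable (φ ∘ Y 0) μ) :
    ∀ᵐ ω ∂μ, Tendsto (fun n : ℕ => (∑ i ∈ range n, φ (Y i ω)) / n) atTop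
      (𝓝 (∫ ω, φ (Y 0 ω) ∂μ)) :=
  strong_law_ae_real (fun i => φ ∘ Y i) hint (fun _ _ hij => (hindep hij).comp hφ hφ)
    fun i => (hident i).comp hφ

variable {ι : Type*} {X : ι → ℕ → Ω → ℝ}

theorem ae_tendsto_avg_sq_row (hindep : iIndepFun (fun p : ι × ℕ => X p.1 p.2) μ)
    (hident : ∀ k i, IdentDistrib (X k i) (X k 0) μ μ) (k : ι)
    (hint : Integrable (fun ω => X k 0 ω ^ 2) μ) :
    ∀ᵐ ω ∂μ, Tendsto (fun n : ℕ => (∑ i ∈ range n, X k i ω ^ 2) / n) atTop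
      (𝓝 (∫ ω, X k 0 ω ^ 2 ∂μ)) :=
  ae_tendsto_avg_comp (Y := X k) (φ := fun x => x ^ 2) (measurable_id.pow_const 2)
    (fun i j hij => hindep.indepFun (i := (k, i)) (j := (k, j)) (by simp [hij])) (hident k) hint

theorem ae_tendsto_avg_mul_rows [IsFiniteMeasure μ]
    (hindep : iIndepFun (fun p : ι × ℕ => X p.1 p.2) μ)
    (hident : ∀ k i, IdentDistrib (X k i) (X k 0) μ μ) {k l : ι} (hkl : k ≠ l)
    (hk : Integrable (X k 0) μ) (hl : Integrable (X l 0) μ) :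
    ∀ᵐ ω ∂μ, Tendsto (fun n : ℕ => (∑ i ∈ range n, X k i ω * X l i ω) / n) atTop
      (𝓝 ((∫ ω, X k 0 ω ∂μ) * ∫ ω, X l 0 ω ∂μ)) := by
  have hmeas (p : ι × ℕ) : AEMeasurable (X p.1 p.2) μ := (hident p.1 p.2).aemeasurable_fst
  have hpair (i : ℕ) : X k i ⟂ᵢ[μ] X l i :=
    hindep.indepFun (i := (k, i)) (j := (l, i)) (by simp [hkl])
  rw [← (hpair 0).integral_fun_mul_eq_mul_integral hk.aestronglyMeasurable
    hl.aestronglyMeasurable]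
  exact ae_tendsto_avg_comp (Y := fun i ω => (X k i ω, X l i ω)) (φ := fun p => p.1 * p.2)
    (by fun_prop)
    (fun i j hij => hindep.indepFun_prodMk_prodMk₀ hmeas (k, i) (l, i) (k, j) (l, j)
      (by simp [hij]) (by simp [hkl, hij]) (by simp [hkl.symm, hij]) (by simp [hij]))
    (fun i => (hident k i).prodMk (hident l i) (hpair i) (hpair 0))
    ((hpair 0).integrable_mul hk hl)

end StrongLaw

theorem sum_exp_cosSim_negatives_tendsto_b_inProbability_general
    {Ω : Type*} {mΩ : MeasurableSpace Ω} (μ : Measure Ω) [IsProbabilityMeasure μ]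
    (b : ℕ)
    (X : Fin (b + 1) → ℕ → Ω → ℝ)
    (hindep : iIndepFun (fun p : Fin (b + 1) × ℕ => X p.1 p.2) μ)
    (hident : ∀ k i, IdentDistrib (X k i) (X 0 0) μ μ)
    (hint : Integrable (fun ω => (X 0 0 ω) ^ 2) μ)
    (hmean : ∫ ω, X 0 0 ω ∂μ = 0)
    (hsecond : ∫ ω, (X 0 0 ω) ^ 2 ∂μ = 1) :
    TendstoInMeasure μ
      (fun (d : ℕ) ω =>
        ∑ k ∈ Finset.Ioi (0 : Fin (b + 1)),
          Real.exp (cosSim (zvec (X 0) d ω) (zvec (X k) d ω)))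
      atTop (fun _ => (b : ℝ)) := by
  have hrow k i : IdentDistrib (X k i) (X k 0) μ μ := (hident k i).trans (hident k 0).symm
  have hsq k : IdentDistrib (fun ω => X k 0 ω ^ 2) (fun ω => X 0 0 ω ^ 2) μ μ :=
    (hident k 0).comp (measurable_id.pow_const 2)
  have hL1 k : Integrable (X k 0) μ := (hident k 0).integrable_iff.2 <|
    ((memLp_two_iff_integrable_sq (hident 0 0).aemeasurable_fst.aestronglyMeasurable).2
      hint).integrable one_le_two
  refine tendstoInMeasure_of_tendsto_ae (fun d => ?_) ?_
  · exact (Finset.aemeasurable_fun_sum _ fun k _ => (aemeasurable_cosSim_zvec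
      (fun i => (hident 0 i).aemeasurable_fst) (fun i => (hident k i).aemeasurable_fst)
      d).exp).aestronglyMeasurable
  filter_upwards [ae_all_iff.2 fun k =>
      ae_tendsto_avg_sq_row hindep hrow k ((hsq k).integrable_iff.2 hint),
    ae_all_iff.2 fun k : {k // k ≠ 0} =>
      ae_tendsto_avg_mul_rows hindep hrow k.2.symm (hL1 0) (hL1 k)] with ω hnorm hinner
  simp only [(hsq _).integral_eq, hsecond, (hident _ 0).integral_eq, hmean, mul_zero]
    at hnorm hinner
  have hcos k (hk : k ≠ 0) :
      Tendsto (fun d => cosSim (zvec (X 0) d ω) (zvec (X k) d ω)) atTop (𝓝 0) := by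
    simpa using tendsto_cosSim_zvec (X 0) (X k) ω one_pos one_pos (hinner ⟨k, hk⟩) (hnorm 0)
      (hnorm k)
  simpa using tendsto_finsetSum _ fun k hk =>
    (Real.continuous_exp.tendsto 0).comp (hcos k (Finset.mem_Ioi.1 hk).ne')

/-- **Denominator limit in the contrastive loss.**
Let `b ≥ 1` and let `{X k i : k ∈ {0,…,b}, i ∈ ℕ}` be a jointly independent
family of identically distributed real random variables with mean `0` and
second moment `1`.  With `z_k⁽ᵈ⁾ = (X k 0, …, X k (d-1)) ∈ ℝᵈ`, the sum
`∑_{k=1}^b exp(S(z_0⁽ᵈ⁾, z_k⁽ᵈ⁾))` converges to `b` in probability as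
`d → ∞`, where `S` is cosine similarity with the zero-division convention. -/
theorem sum_exp_cosSim_negatives_tendsto_b_inProbability
    {Ω : Type*} {mΩ : MeasurableSpace Ω} (μ : Measure Ω) [IsProbabilityMeasure μ]
    (b : ℕ) (hb : 1 ≤ b)
    (X : Fin (b + 1) → ℕ → Ω → ℝ)
    (hmeas : ∀ k i, Measurable (X k i))
    (hindep : iIndepFun (fun p : Fin (b + 1) × ℕ => X p.1 p.2) μ)
    (hident : ∀ k i, IdentDistrib (X k i) (X 0 0) μ μ)
    (hint : Integrable (fun ω => (X 0 0 ω) ^ 2) μ)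
    (hmean : ∫ ω, X 0 0 ω ∂μ = 0)
    (hsecond : ∫ ω, (X 0 0 ω) ^ 2 ∂μ = 1) :
    TendstoInMeasure μ
      (fun (d : ℕ) ω =>
        ∑ k ∈ Finset.Ioi (0 : Fin (b + 1)),
          Real.exp (cosSim (zvec (X 0) d ω) (zvec (X k) d ω)))
      atTop (fun _ => (b : ℝ)) :=
  sum_exp_cosSim_negatives_tendsto_b_inProbability_general (mΩ := mΩ) μ b X hindep hident hint hmean
    hsecond
end

section
/- Let b ≥ 1 and let {X_{k,i} : k ∈ {0, 1, …, b}, i ∈ ℕ} be a jointly independent family of identically distributed real-valued random variables with E = 0 and second moment 1, and set z_k^{(d)} = (X_{k,0}, …, X_{k,d−1}) ∈ ℝ^d. Define the ideal contrastive loss term L_d = exp(S(z_0^{(d)}, z_0^{(d)})) / (exp(S(z_0^{(d)}, z_0^{(d)})) + Σ_{k=1}^{b} exp(S(z_0^{(d)}, z_k^{(d)}))), where S is cosine similarity with the zero-division convention. Then L_d converges to e/(e + b) in probability as d → ∞. -/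
/-!
By the strong law of large numbers, applied coordinatewise to the squares `X k i ^ 2` and to the
products `X 0 i * X k i`, almost surely `‖z_k‖² / d → E[X²] = 1` and
`⟨z_0, z_k⟩ / d → E[X]² = 0` for `k ≠ 0`. Hence `S(z_0, z_0) → 1` and `S(z_0, z_k) → 0` almost
surely, so the loss converges almost surely to `e / (e + b)`, and a fortiori in probability.
-/

open MeasureTheory ProbabilityTheory Filter Finset
open scoped Topology

noncomputable def contrastiveLoss {b d : ℕ} (z : Fin (b + 1) → EuclideanSpace ℝ (Fin d)) : ℝ :=
  Real.exp (cosSim (z 0) (z 0)) /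
    (Real.exp (cosSim (z 0) (z 0)) + ∑ k ∈ Ioi (0 : Fin (b + 1)), Real.exp (cosSim (z 0) (z k)))

lemma measurable_cosSim {n : ℕ} :
    Measurable fun p : EuclideanSpace ℝ (Fin n) × EuclideanSpace ℝ (Fin n) => cosSim p.1 p.2 :=
  (measurable_fst.inner measurable_snd).div (measurable_fst.norm.mul measurable_snd.norm)

lemma measurable_contrastiveLoss {b d : ℕ} :
    Measurable (contrastiveLoss : (Fin (b + 1) → EuclideanSpace ℝ (Fin d)) → ℝ) := by
  have hcos (k : Fin (b + 1)) :
      Measurable fun z : Fin (b + 1) → EuclideanSpace ℝ (Fin d) => cosSim (z 0) (z k) :=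
    measurable_cosSim.comp (f := fun z : Fin (b + 1) → EuclideanSpace ℝ (Fin d) => (z 0, z k))
      ((measurable_pi_apply 0).prodMk (measurable_pi_apply k))
  unfold contrastiveLoss
  exact (hcos 0).exp.div ((hcos 0).exp.add (Finset.measurable_sum _ fun k _ => (hcos k).exp))

lemma tendsto_cosSim {u v : (d : ℕ) → EuclideanSpace ℝ (Fin d)} {a c r : ℝ}
    (ha : 0 < a) (hc : 0 < c)
    (hu : Tendsto (fun d : ℕ => ‖u d‖ ^ 2 / d) atTop (𝓝 a))
    (hv : Tendsto (fun d : ℕ => ‖v d‖ ^ 2 / d) atTop (𝓝 c))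
    (huv : Tendsto (fun d : ℕ => inner ℝ (u d) (v d) / d) atTop (𝓝 r)) :
    Tendsto (fun d => cosSim (u d) (v d)) atTop (𝓝 (r / (√a * √c))) := by
  refine (huv.div (hu.sqrt.mul hv.sqrt) (by positivity)).congr' ?_
  filter_upwards [eventually_gt_atTop 0] with d hd
  have hd' : (0 : ℝ) < d := Nat.cast_pos.2 hd
  rw [Pi.div_apply, Real.sqrt_div' _ hd'.le, Real.sqrt_div' _ hd'.le, Real.sqrt_sq (norm_nonneg _),
    Real.sqrt_sq (norm_nonneg _), div_mul_div_comm, Real.mul_self_sqrt hd'.le,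
    div_div_div_cancel_right₀ hd'.ne', cosSim]

lemma tendsto_cosSim_self {u : (d : ℕ) → EuclideanSpace ℝ (Fin d)} {a : ℝ} (ha : 0 < a)
    (hu : Tendsto (fun d : ℕ => ‖u d‖ ^ 2 / d) atTop (𝓝 a)) :
    Tendsto (fun d => cosSim (u d) (u d)) atTop (𝓝 1) := by
  have h := tendsto_cosSim ha ha hu hu (by simpa only [real_inner_self_eq_norm_sq] using hu)
  rwa [Real.mul_self_sqrt ha.le, div_self ha.ne'] at h

lemma tendsto_contrastiveLoss {b : ℕ} {z : (d : ℕ) → Fin (b + 1) → EuclideanSpace ℝ (Fin d)}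
    (hself : Tendsto (fun d => cosSim (z d 0) (z d 0)) atTop (𝓝 1))
    (hneg : ∀ k ≠ 0, Tendsto (fun d => cosSim (z d 0) (z d k)) atTop (𝓝 0)) :
    Tendsto (fun d => contrastiveLoss (z d)) atTop (𝓝 (Real.exp 1 / (Real.exp 1 + b))) := by
  have hsum : Tendsto (fun d => ∑ k ∈ Ioi (0 : Fin (b + 1)), Real.exp (cosSim (z d 0) (z d k)))
      atTop (𝓝 (b : ℝ)) := by
    have h := tendsto_finsetSum (Ioi (0 : Fin (b + 1)))
      fun k hk => (hneg k (mem_Ioi.1 hk).ne').rexp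
    simpa [Fin.card_Ioi] using h
  exact hself.rexp.div (hself.rexp.add hsum) (by positivity)

section Coordinates

variable {Ω : Type*}

lemma measurable_zvec [MeasurableSpace Ω] {X : ℕ → Ω → ℝ} (hX : ∀ i, Measurable (X i)) (d : ℕ) :
    Measurable (zvec X d) :=
  (MeasurableEquiv.toLp 2 (Fin d → ℝ)).measurable.comp (measurable_pi_lambda _ fun i => hX i)

lemma norm_sq_zvec (X : ℕ → Ω → ℝ) (d : ℕ) (ω : Ω) :
    ‖zvec X d ω‖ ^ 2 = ∑ i ∈ range d, X i ω ^ 2 := by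
  rw [EuclideanSpace.norm_sq_eq, ← Fin.sum_univ_eq_sum_range (fun i => X i ω ^ 2)]
  simp [zvec]

lemma inner_zvec (X Y : ℕ → Ω → ℝ) (d : ℕ) (ω : Ω) :
    inner ℝ (zvec X d ω) (zvec Y d ω) = ∑ i ∈ range d, X i ω * Y i ω := by
  rw [← Fin.sum_univ_eq_sum_range (fun i => X i ω * Y i ω)]
  simp [zvec, PiLp.inner_apply, mul_comm]

end Coordinates

section StrongLaw

variable {Ω : Type*} {mΩ : MeasurableSpace Ω} {μ : Measure Ω}

lemma ae_tendsto_sum_comp_div {E : Type*} [MeasurableSpace E] {V : ℕ → Ω → E} {g : E → ℝ}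
    (hg : Measurable g) (hint : Integrable (fun ω => g (V 0 ω)) μ)
    (hindep : Pairwise fun i j => IndepFun (V i) (V j) μ)
    (hident : ∀ i, IdentDistrib (V i) (V 0) μ μ) :
    ∀ᵐ ω ∂μ, Tendsto (fun d : ℕ => (∑ i ∈ range d, g (V i ω)) / d) atTop
      (𝓝 (∫ ω, g (V 0 ω) ∂μ)) := by
  filter_upwards [strong_law_ae (fun i ω => g (V i ω)) hint
    (fun i j hij => (hindep hij).comp hg hg) fun i => (hident i).comp hg] with ω hω
  simpa only [smul_eq_mul, inv_mul_eq_div] using hω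

variable {ι : Type*} {X : ι → ℕ → Ω → ℝ}

lemma ae_tendsto_norm_sq_zvec_div (hindep : iIndepFun (fun p : ι × ℕ => X p.1 p.2) μ) (k : ι)
    (hident : ∀ i, IdentDistrib (X k i) (X k 0) μ μ)
    (hint : Integrable (fun ω => X k 0 ω ^ 2) μ) :
    ∀ᵐ ω ∂μ, Tendsto (fun d : ℕ => ‖zvec (X k) d ω‖ ^ 2 / d) atTop
      (𝓝 (∫ ω, X k 0 ω ^ 2 ∂μ)) := by
  simp_rw [norm_sq_zvec]
  exact ae_tendsto_sum_comp_div (V := X k) (g := fun x => x ^ 2) (measurable_id.pow_const 2) hint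
    (fun i j hij => hindep.indepFun (i := (k, i)) (j := (k, j)) (by simp [hij])) hident

lemma ae_tendsto_inner_zvec_div [IsFiniteMeasure μ] (hmeas : ∀ k i, Measurable (X k i))
    (hindep : iIndepFun (fun p : ι × ℕ => X p.1 p.2) μ) {k l : ι} (hkl : k ≠ l)
    (hk : ∀ i, IdentDistrib (X k i) (X k 0) μ μ) (hl : ∀ i, IdentDistrib (X l i) (X l 0) μ μ)
    (hintk : Integrable (X k 0) μ) (hintl : Integrable (X l 0) μ) :
    ∀ᵐ ω ∂μ, Tendsto (fun d : ℕ => inner ℝ (zvec (X k) d ω) (zvec (X l) d ω) / d) atTop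
      (𝓝 ((∫ ω, X k 0 ω ∂μ) * ∫ ω, X l 0 ω ∂μ)) := by
  have hpair : ∀ i, IndepFun (X k i) (X l i) μ := fun i =>
    hindep.indepFun (i := (k, i)) (j := (l, i)) (by simp [hkl])
  have h := ae_tendsto_sum_comp_div (V := fun i ω => (X k i ω, X l i ω))
    (g := fun p => p.1 * p.2)
    (measurable_fst.mul measurable_snd) ((hpair 0).integrable_mul hintk hintl)
    (fun i j hij => hindep.indepFun_prodMk_prodMk (fun p => hmeas p.1 p.2) (k, i) (l, i) (k, j)
      (l, j) (by simp [hij]) (by simp [hkl]) (by simp [hkl.symm]) (by simp [hij]))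
    fun i => (hk i).prodMk (hl i) (hpair i) (hpair 0)
  rw [(hpair 0).integral_fun_mul_eq_mul_integral hintk.1 hintl.1] at h
  simpa only [inner_zvec] using h

end StrongLaw

theorem ideal_contrastive_loss_tendsto_inProbability_general
    {Ω : Type*} {mΩ : MeasurableSpace Ω} (μ : Measure Ω) [IsProbabilityMeasure μ]
    (b : ℕ)
    (X : Fin (b + 1) → ℕ → Ω → ℝ)
    (hmeas : ∀ k i, Measurable (X k i))
    (hindep : iIndepFun (fun p : Fin (b + 1) × ℕ => X p.1 p.2) μ)
    (hident : ∀ k i, IdentDistrib (X k i) (X 0 0) μ μ)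
    (hint : Integrable (fun ω => (X 0 0 ω) ^ 2) μ)
    (hmean : ∫ ω, X 0 0 ω ∂μ = 0)
    (hsecond : ∫ ω, (X 0 0 ω) ^ 2 ∂μ = 1) :
    TendstoInMeasure μ
      (fun (d : ℕ) ω =>
        Real.exp (cosSim (zvec (X 0) d ω) (zvec (X 0) d ω)) /
          (Real.exp (cosSim (zvec (X 0) d ω) (zvec (X 0) d ω)) +
            ∑ k ∈ Finset.Ioi (0 : Fin (b + 1)),
              Real.exp (cosSim (zvec (X 0) d ω) (zvec (X k) d ω))))
      atTop (fun _ => Real.exp 1 / (Real.exp 1 + b)) := by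
  have hrow : ∀ k i, IdentDistrib (X k i) (X k 0) μ μ := fun k i =>
    (hident k i).trans (hident k 0).symm
  have hsq : ∀ k, IdentDistrib (fun ω => X k 0 ω ^ 2) (fun ω => X 0 0 ω ^ 2) μ μ := fun k =>
    (hident k 0).comp (measurable_id.pow_const 2)
  have hint1 : ∀ k, Integrable (X k 0) μ := fun k => (hident k 0).symm.integrable_snd
    (((memLp_two_iff_integrable_sq (hmeas 0 0).aestronglyMeasurable).2 hint).integrable one_le_two)
  have hnorm : ∀ k, ∀ᵐ ω ∂μ, Tendsto (fun d : ℕ => ‖zvec (X k) d ω‖ ^ 2 / d) atTop (𝓝 1) :=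
    fun k => by
      simpa only [(hsq k).integral_eq, hsecond] using
        ae_tendsto_norm_sq_zvec_div hindep k (hrow k) ((hsq k).symm.integrable_snd hint)
  have hinner : ∀ k, ∀ᵐ ω ∂μ, k ≠ 0 →
      Tendsto (fun d : ℕ => inner ℝ (zvec (X 0) d ω) (zvec (X k) d ω) / d) atTop (𝓝 0) := by
    intro k
    rcases eq_or_ne k 0 with rfl | hk
    · exact ae_of_all _ fun _ h => absurd rfl h
    · filter_upwards [ae_tendsto_inner_zvec_div hmeas hindep hk.symm (hrow 0) (hrow k) (hint1 0)
        (hint1 k)] with ω hω _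
      simpa [hmean] using hω
  show TendstoInMeasure μ (fun d ω => contrastiveLoss fun k => zvec (X k) d ω) atTop _
  refine tendstoInMeasure_of_tendsto_ae (fun d => (measurable_contrastiveLoss.comp
    (measurable_pi_lambda _ fun k => measurable_zvec (hmeas k) d)).aestronglyMeasurable) ?_
  filter_upwards [ae_all_iff.2 hnorm, ae_all_iff.2 hinner] with ω hω hω'
  exact tendsto_contrastiveLoss (tendsto_cosSim_self one_pos (hω 0)) fun k hk => by
    simpa using tendsto_cosSim one_pos one_pos (hω 0) (hω k) (hω' k hk)

/-- **Limit of the ideal contrastive loss term.**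
Let `b ≥ 1` and let `{X k i : k ∈ {0,…,b}, i ∈ ℕ}` be a jointly independent
family of identically distributed real random variables with mean `0` and
second moment `1`.  With `z_k⁽ᵈ⁾ = (X k 0, …, X k (d-1)) ∈ ℝᵈ`, the ideal
contrastive loss term
`L_d = exp(S(z₀,z₀)) / (exp(S(z₀,z₀)) + ∑_{k=1}^b exp(S(z₀,z_k)))`
converges to `e / (e + b)` in probability as `d → ∞`. -/
theorem ideal_contrastive_loss_tendsto_inProbability
    {Ω : Type*} {mΩ : MeasurableSpace Ω} (μ : Measure Ω) [IsProbabilityMeasure μ]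
    (b : ℕ) (hb : 1 ≤ b)
    (X : Fin (b + 1) → ℕ → Ω → ℝ)
    (hmeas : ∀ k i, Measurable (X k i))
    (hindep : iIndepFun (fun p : Fin (b + 1) × ℕ => X p.1 p.2) μ)
    (hident : ∀ k i, IdentDistrib (X k i) (X 0 0) μ μ)
    (hint : Integrable (fun ω => (X 0 0 ω) ^ 2) μ)
    (hmean : ∫ ω, X 0 0 ω ∂μ = 0)
    (hsecond : ∫ ω, (X 0 0 ω) ^ 2 ∂μ = 1) :
    TendstoInMeasure μ
      (fun (d : ℕ) ω =>
        Real.exp (cosSim (zvec (X 0) d ω) (zvec (X 0) d ω)) /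
          (Real.exp (cosSim (zvec (X 0) d ω) (zvec (X 0) d ω)) +
            ∑ k ∈ Finset.Ioi (0 : Fin (b + 1)),
              Real.exp (cosSim (zvec (X 0) d ω) (zvec (X k) d ω))))
      atTop (fun _ => Real.exp 1 / (Real.exp 1 + b)) :=
  ideal_contrastive_loss_tendsto_inProbability_general (mΩ := mΩ) μ b X hmeas hindep hident hint
    hmean hsecond
end
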